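/- The deterministic safety automaton D_{V,π} over alphabet V, with states S^⊥_{η,d} (bounded adaptive multi-counters plus a bottom element ⊥), transitions sending state σ on letter v to the greatest τ such that (σ,τ) is progressive with respect to π(v), and unsafe state ⊥, rejects every infinite word of vertices in which the highest priority occurring infinitely often is odd. -/

import Mathlib

/-!
Only the components of a state for odd priorities `≥ p` matter for a vertex of priority `p`.
Once the highest priority seen is at most the odd `p`, the `p`-truncation of the run never
increases, and it strictly decreases at every visit of priority `p` unless the run is already
at `⊥`. The truncations of states form a finite set on which the strict order is
well-founded, so infinitely many strict decreases are impossible and the run must reach `⊥`.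
-/

/-- The strict order on finite binary strings:
`0s < ε`, `ε < 1s`, `bs < bs' iff s < s'`, and `0s < 1s'`. -/
def bslt : List Bool → List Bool → Prop
  | [], [] => False
  | b :: _, [] => b = false
  | [], b :: _ => b = true
  | a :: s, b :: t => (a = false ∧ b = true) ∨ (a = b ∧ bslt s t)

/-- Strict order on `S^⊥`: multi-counters (tuples of binary strings, compared
lexicographically, a proper prefix being smaller) together with a bottom element
`⊥ = none`. -/
def olex : Option (List (List Bool)) → Option (List (List Bool)) → Prop
  | none, none => False
  | none, some _ => True
  | some _, none => False
  | some s, some t => List.Lex bslt s t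

/-- Non-strict version of `olex`. -/
def ole (σ τ : Option (List (List Bool))) : Prop := σ = τ ∨ olex σ τ

/-- The `p`-truncation (components for odd priorities `≥ p`), with `⊥|_p = ⊥`. -/
def struncO (d p : ℕ) : Option (List (List Bool)) → Option (List (List Bool)) :=
  Option.map (fun t => t.take ((d + 1 - p) / 2))

/-- `(σ, τ)` is progressive w.r.t. priority `p` iff `σ|_p ≥ τ|_p` and, when `p` is
odd, either the inequality is strict or `σ = τ = ⊥`. -/
def ProgPair (d : ℕ) (σ τ : Option (List (List Bool))) (p : ℕ) : Prop :=
  ole (struncO d p τ) (struncO d p σ) ∧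
  (Odd p → olex (struncO d p τ) (struncO d p σ) ∨ (σ = none ∧ τ = none))

/-- The state set `S^⊥_{η,d}`: `⊥` together with the `⌈lg η⌉`-bounded adaptive
`i`-counters for `0 ≤ i ≤ d/2`. -/
def States (η d : ℕ) : Set (Option (List (List Bool))) :=
  {x | ∀ t, x = some t → t.length ≤ d / 2 ∧ (t.map List.length).sum ≤ Nat.clog 2 η}

/-- The initial state: the maximum multi-counter `(1⋯1, ε, …, ε)`. -/
def initState (η d : ℕ) : Option (List (List Bool)) :=
  some (List.replicate (Nat.clog 2 η) true :: List.replicate (d / 2 - 1) ([] : List Bool))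

open Filter

theorem bslt_irrefl (s : List Bool) : ¬ bslt s s := by
  induction s with
  | nil => exact id
  | cons a s ih =>
    rintro (⟨rfl, h⟩ | ⟨-, h⟩)
    exacts [Bool.false_ne_true h, ih h]

theorem bslt_trans {s t u : List Bool} (hst : bslt s t) (htu : bslt t u) : bslt s u := by
  induction s generalizing t u with
  | nil => cases t <;> cases u <;> simp_all [bslt]
  | cons a s ih =>
    rcases t with _ | ⟨b, t⟩ <;> rcases u with _ | ⟨c, u⟩ <;> simp only [bslt] at hst htu ⊢ <;>
      grind

instance : IsStrictOrder (Option (List (List Bool))) olex where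
  irrefl
    | none => id
    | some s => List.lex_irrefl bslt_irrefl s
  trans
    | none, some _, some _, _, _ => trivial
    | some _, some _, some _, h₁, h₂ => List.lex_trans bslt_trans h₁ h₂

theorem List.Lex.take_eq_or_lex_take {α : Type*} {r : α → α → Prop} {s t : List α}
    (h : List.Lex r s t) (k : ℕ) : s.take k = t.take k ∨ List.Lex r (s.take k) (t.take k) := by
  induction h generalizing k with
  | nil => cases k <;> simp
  | rel h => cases k <;> simp [List.Lex.rel h]
  | @cons a _ _ _ ih =>
    cases k with
    | zero => simp
    | succ k => exact (ih k).imp (congrArg (a :: ·)) List.Lex.cons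

theorem ole_map_take (k : ℕ) {σ τ : Option (List (List Bool))} (h : ole σ τ) :
    ole (σ.map (·.take k)) (τ.map (·.take k)) := by
  rcases h with rfl | h
  · exact Or.inl rfl
  match σ, τ, h with
  | none, some _, _ => exact Or.inr trivial
  | some _, some _, h => exact (List.Lex.take_eq_or_lex_take h k).imp (congrArg some) id

theorem ole_struncO_of_le {d p q : ℕ} (hqp : q ≤ p) {σ τ : Option (List (List Bool))}
    (h : ole (struncO d q σ) (struncO d q τ)) : ole (struncO d p σ) (struncO d p τ) := by
  have hk : (d + 1 - p) / 2 ≤ (d + 1 - q) / 2 := by omega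
  have key : ∀ x, struncO d p x = (struncO d q x).map (·.take ((d + 1 - p) / 2)) := by
    rintro (_ | t)
    · rfl
    · simp [struncO, List.take_take, Nat.min_eq_left hk]
  rw [key σ, key τ]
  exact ole_map_take _ h

theorem Set.Finite.setOf_length_le_forall_mem {α : Type*} {B : Set α} (hB : B.Finite)
    (L : ℕ) : {t : List α | t.length ≤ L ∧ ∀ x ∈ t, x ∈ B}.Finite := by
  have := hB.to_subtype
  refine ((List.finite_length_le B L).image (List.map Subtype.val)).subset ?_
  rintro t ⟨hL, htB⟩
  lift t to List B using htB
  exact ⟨t, by simpa using hL, rfl⟩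

theorem finite_states (η d : ℕ) : (States η d).Finite := by
  refine (((List.finite_length_le Bool (Nat.clog 2 η)).setOf_length_le_forall_mem
    (d / 2)).image some |>.insert none).subset ?_
  rintro (_ | t) h
  · exact Set.mem_insert _ _
  · obtain ⟨hL, hsum⟩ := h t rfl
    exact Or.inr ⟨t, ⟨hL, fun s hs => (List.le_sum_of_mem (List.mem_map_of_mem hs)).trans hsum⟩,
      rfl⟩

theorem Set.Finite.eventually_not_rel_succ {α : Type*} {r : α → α → Prop} [IsStrictOrder α r]
    {s : Set α} (hs : s.Finite) {f : ℕ → α} (hfs : ∀ᶠ n in atTop, f n ∈ s)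
    (hf : ∀ᶠ n in atTop, f (n + 1) = f n ∨ r (f (n + 1)) (f n)) :
    ∀ᶠ n in atTop, ¬ r (f (n + 1)) (f n) := by
  -- A value `f n₀` that is `r`-minimal on the tail cannot be undercut by a later strict drop.
  obtain ⟨N, hN⟩ := eventually_atTop.1 (hfs.and hf)
  obtain ⟨n₀, hn₀ : N ≤ n₀, hmin⟩ :=
    (InvImage.wf f (Set.wellFoundedOn_iff.1 (hs.wellFoundedOn (r := r)))).has_min
      (Set.Ici N) ⟨N, Set.mem_Ici.2 le_rfl⟩
  have hchain : ∀ n ≥ n₀, f n = f n₀ ∨ r (f n) (f n₀) := by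
    intro n hn
    induction n, hn using Nat.le_induction with
    | base => exact Or.inl rfl
    | succ n hn ih =>
      rcases (hN n (hn₀.trans hn)).2 with h | h
      · exact h ▸ ih
      · exact Or.inr (ih.elim (· ▸ h) (_root_.trans h))
  refine eventually_atTop.2 ⟨n₀, fun n hn hdrop => hmin (n + 1) (Set.mem_Ici.2 (by omega)) ?_⟩
  have hlt : r (f (n + 1)) (f n₀) := by
    rcases hchain n hn with h | h
    · exact h ▸ hdrop
    · exact _root_.trans hdrop h
  exact ⟨hlt, (hN _ (by omega)).1, (hN _ hn₀).1⟩

theorem automaton_rejects_limsup_odd_general {V : Type*} (d η : ℕ)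
    (π : V → ℕ)
    (tr : Option (List (List Bool)) → V → Option (List (List Bool)))
    (htr : ∀ σ v, (tr σ v ∈ States η d ∧ ProgPair d σ (tr σ v) (π v)) ∧
      ∀ τ ∈ States η d, ProgPair d σ τ (π v) → ole τ (tr σ v))
    (w : ℕ → V)
    (hodd : ∃ p, Odd p ∧ (∃ N, ∀ n ≥ N, π (w n) ≤ p) ∧ (∀ N, ∃ n ≥ N, π (w n) = p))
    (ρ : ℕ → Option (List (List Bool)))
    (hρ : ∀ n, ρ (n + 1) = tr (ρ n) (w n)) :
    ∃ n, ρ n = none := by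
  by_contra! hρ_ne
  obtain ⟨p, hp, hmax, hinf⟩ := hodd
  have hprog (n : ℕ) : ProgPair d (ρ n) (ρ (n + 1)) (π (w n)) := hρ n ▸ (htr _ _).1.2
  have hstates : ∀ᶠ n in atTop, ρ n ∈ States η d :=
    eventually_atTop.2 ⟨1, fun n hn => Nat.succ_pred_eq_of_pos hn ▸ hρ _ ▸ (htr _ _).1.1⟩
  set f : ℕ → Option (List (List Bool)) := fun n => struncO d p (ρ n)
  have hmono : ∀ᶠ n in atTop, ole (f (n + 1)) (f n) :=
    (eventually_atTop.2 hmax).mono fun n hn => ole_struncO_of_le hn (hprog n).1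
  have hdrop : ∃ᶠ n in atTop, olex (f (n + 1)) (f n) := by
    refine (frequently_atTop.2 hinf).mono fun n hn => ?_
    have hstep := (hprog n).2
    rw [hn] at hstep
    exact (hstep hp).resolve_right fun h => hρ_ne n h.1
  have hstable : ∀ᶠ n in atTop, ¬ olex (f (n + 1)) (f n) :=
    ((finite_states η d).image (struncO d p)).eventually_not_rel_succ
      (hstates.mono fun n => Set.mem_image_of_mem _) hmono
  obtain ⟨n, hlt, hnot⟩ := (hdrop.and_eventually hstable).exists
  exact hnot hlt

/-- The deterministic safety automaton `D_{V,π}` — with states `S^⊥_{η,d}`, initial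
state the maximum multi-counter, transition sending state `σ` on letter `v` to the
greatest `τ` such that `(σ, τ)` is progressive w.r.t. `π(v)`, and unsafe state `⊥` —
rejects every infinite word of vertices in which the highest priority occurring
infinitely often is odd: its run visits `⊥`. -/
theorem automaton_rejects_limsup_odd {V : Type*} [Fintype V] (d η : ℕ)
    (π : V → ℕ) (hπ : ∀ v, 1 ≤ π v ∧ π v ≤ d)
    (hη : η = Nat.card {v : V // Odd (π v)})
    (tr : Option (List (List Bool)) → V → Option (List (List Bool)))
    (htr : ∀ σ v, (tr σ v ∈ States η d ∧ ProgPair d σ (tr σ v) (π v)) ∧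
      ∀ τ ∈ States η d, ProgPair d σ τ (π v) → ole τ (tr σ v))
    (w : ℕ → V)
    (hodd : ∃ p, Odd p ∧ (∃ N, ∀ n ≥ N, π (w n) ≤ p) ∧ (∀ N, ∃ n ≥ N, π (w n) = p))
    (ρ : ℕ → Option (List (List Bool)))
    (hρ0 : ρ 0 = initState η d) (hρ : ∀ n, ρ (n + 1) = tr (ρ n) (w n)) :
    ∃ n, ρ n = none :=
  automaton_rejects_limsup_odd_general d η π tr htr w hodd ρ hρ
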